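/- arXiv:2406.05272 — 6 statements merged into one kernel-verified Lean document; each statement's English description precedes it below -/
import Mathlib

section
/- Let V be a finite-dimensional real inner product space with two inner products ⟨·,·⟩₁ and ⟨·,·⟩₂ satisfying c·|x|₁² ≤ |x|₂² ≤ C·|x|₁² for all x ∈ V, where 0 < c ≤ C. Then for any nonzero x, y ∈ V, cos ∠₂(x,y) ≥ 1 − (C/c)·(1 − cos ∠₁(x,y)), where ∠ᵢ(x,y) denotes the angle between x and y with respect to the i-th inner product. -/
/-- The angle between two vectors with respect to a (not necessarily standard) inner
product `inn`, defined as `arccos (⟨x,y⟩ / (|x|·|y|))`. -/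
noncomputable def angleWrt {V : Type*} [AddCommGroup V] [Module ℝ V]
    (inn : V → V → ℝ) (x y : V) : ℝ :=
  Real.arccos (inn x y / (Real.sqrt (inn x x) * Real.sqrt (inn y y)))

section aux

variable {V : Type*} [AddCommGroup V] [Module ℝ V]

private lemma inn_smul_right (inn : V → V → ℝ)
    (hsmul : ∀ (a : ℝ) (x y : V), inn (a • x) y = a * inn x y)
    (hsymm : ∀ x y : V, inn x y = inn y x) (a : ℝ) (x y : V) :
    inn x (a • y) = a * inn x y := by
  rw [hsymm, hsmul, hsymm]

private lemma inn_self_nonneg (inn : V → V → ℝ)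
    (hsmul : ∀ (a : ℝ) (x y : V), inn (a • x) y = a * inn x y)
    (hpos : ∀ x : V, x ≠ 0 → 0 < inn x x) (x : V) : 0 ≤ inn x x := by
  rcases eq_or_ne x 0 with rfl | h
  · have h0 : inn (0 : V) 0 = 0 := by
      have := hsmul 0 0 0
      simpa using this
    simp [h0]
  · exact (hpos x h).le

private lemma inn_expand (inn : V → V → ℝ)
    (hadd : ∀ x x' y : V, inn (x + x') y = inn x y + inn x' y)
    (hsmul : ∀ (a : ℝ) (x y : V), inn (a • x) y = a * inn x y)
    (hsymm : ∀ x y : V, inn x y = inn y x) (a b : ℝ) (x y : V) :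
    inn (a • x - b • y) (a • x - b • y)
      = a * a * inn x x - 2 * (a * b) * inn x y + b * b * inn y y := by
  have hadd' : ∀ x y y' : V, inn x (y + y') = inn x y + inn x y' := fun x y y' => by
    rw [hsymm, hadd, hsymm y, hsymm y']
  have hsmul' := inn_smul_right inn hsmul hsymm
  have hyx : inn y x = inn x y := hsymm y x
  rw [sub_eq_add_neg, ← neg_one_smul ℝ (b • y), smul_smul]
  simp only [hadd, hadd', hsmul, hsmul', hyx]
  ring

private lemma inn_cs (inn : V → V → ℝ)
    (hadd : ∀ x x' y : V, inn (x + x') y = inn x y + inn x' y)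
    (hsmul : ∀ (a : ℝ) (x y : V), inn (a • x) y = a * inn x y)
    (hsymm : ∀ x y : V, inn x y = inn y x)
    (hpos : ∀ x : V, x ≠ 0 → 0 < inn x x) (x y : V) :
    inn x y ^ 2 ≤ inn x x * inn y y := by
  rcases eq_or_ne x 0 with rfl | hx
  · have h0 : inn (0 : V) y = 0 := by
      have := hsmul 0 0 y
      simpa using this
    have h00 : inn (0 : V) (0 : V) = 0 := by
      have := hsmul 0 0 0
      simpa using this
    simp [h0, h00]
  · have hA := hpos x hx
    have key := inn_self_nonneg inn hsmul hpos (inn x x • y - inn x y • x)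
    rw [inn_expand inn hadd hsmul hsymm _ _ y x] at key
    have hyx : inn y x = inn x y := hsymm y x
    rw [hyx] at key
    nlinarith [key, hA]

end aux

set_option maxHeartbeats 1000000 in
/-- If two inner products on a finite-dimensional real vector space satisfy
`c·|x|₁² ≤ |x|₂² ≤ C·|x|₁²`, then `cos ∠₂(x,y) ≥ 1 − (C/c)·(1 − cos ∠₁(x,y))` for all
nonzero `x, y`. -/
theorem stmt_0 {V : Type*} [AddCommGroup V] [Module ℝ V] [FiniteDimensional ℝ V]
    (inn₁ inn₂ : V → V → ℝ)
    -- `inn₁` is an inner product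
    (h₁add : ∀ x x' y : V, inn₁ (x + x') y = inn₁ x y + inn₁ x' y)
    (h₁smul : ∀ (a : ℝ) (x y : V), inn₁ (a • x) y = a * inn₁ x y)
    (h₁symm : ∀ x y : V, inn₁ x y = inn₁ y x)
    (h₁pos : ∀ x : V, x ≠ 0 → 0 < inn₁ x x)
    -- `inn₂` is an inner product
    (h₂add : ∀ x x' y : V, inn₂ (x + x') y = inn₂ x y + inn₂ x' y)
    (h₂smul : ∀ (a : ℝ) (x y : V), inn₂ (a • x) y = a * inn₂ x y)
    (h₂symm : ∀ x y : V, inn₂ x y = inn₂ y x)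
    (h₂pos : ∀ x : V, x ≠ 0 → 0 < inn₂ x x)
    -- the comparison `c·|x|₁² ≤ |x|₂² ≤ C·|x|₁²` with `0 < c ≤ C`
    (c C : ℝ) (hc : 0 < c) (hcC : c ≤ C)
    (hlow : ∀ x : V, c * inn₁ x x ≤ inn₂ x x)
    (hhigh : ∀ x : V, inn₂ x x ≤ C * inn₁ x x)
    (x y : V) (hx : x ≠ 0) (hy : y ≠ 0) :
    1 - (C / c) * (1 - Real.cos (angleWrt inn₁ x y)) ≤ Real.cos (angleWrt inn₂ x y) := by
  have P1 := h₁pos x hx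
  have Q1 := h₁pos y hy
  have P2 := h₂pos x hx
  have Q2 := h₂pos y hy
  set p := Real.sqrt (inn₁ x x) with hpdef
  set q := Real.sqrt (inn₁ y y) with hqdef
  set p2 := Real.sqrt (inn₂ x x) with hp2def
  set q2 := Real.sqrt (inn₂ y y) with hq2def
  have hp0 : 0 < p := Real.sqrt_pos.mpr P1
  have hq0 : 0 < q := Real.sqrt_pos.mpr Q1
  have hp20 : 0 < p2 := Real.sqrt_pos.mpr P2
  have hq20 : 0 < q2 := Real.sqrt_pos.mpr Q2
  have hpsq : p ^ 2 = inn₁ x x := Real.sq_sqrt P1.le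
  have hqsq : q ^ 2 = inn₁ y y := Real.sq_sqrt Q1.le
  have hp2sq : p2 ^ 2 = inn₂ x x := Real.sq_sqrt P2.le
  have hq2sq : q2 ^ 2 = inn₂ y y := Real.sq_sqrt Q2.le
  have hD1 : 0 < p * q := mul_pos hp0 hq0
  have hD2 : 0 < p2 * q2 := mul_pos hp20 hq20
  have cs1 := inn_cs inn₁ h₁add h₁smul h₁symm h₁pos x y
  have cs2 := inn_cs inn₂ h₂add h₂smul h₂symm h₂pos x y
  have hR1 : inn₁ x y ≤ p * q := by nlinarith [cs1, hpsq, hqsq, hD1]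
  have hR1' : -(p * q) ≤ inn₁ x y := by nlinarith [cs1, hpsq, hqsq, hD1]
  have hR2 : inn₂ x y ≤ p2 * q2 := by nlinarith [cs2, hp2sq, hq2sq, hD2]
  have hR2' : -(p2 * q2) ≤ inn₂ x y := by nlinarith [cs2, hp2sq, hq2sq, hD2]
  have hcos1 : Real.cos (angleWrt inn₁ x y) = inn₁ x y / (p * q) := by
    rw [angleWrt, Real.cos_arccos]
    · exact (le_div_iff₀ hD1).mpr (by linarith)
    · exact (div_le_one hD1).mpr hR1
  have hcos2 : Real.cos (angleWrt inn₂ x y) = inn₂ x y / (p2 * q2) := by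
    rw [angleWrt, Real.cos_arccos]
    · exact (le_div_iff₀ hD2).mpr (by linarith)
    · exact (div_le_one hD2).mpr hR2
  -- the key geometric inequality
  have hComp := hhigh (q • x - p • y)
  rw [inn_expand inn₁ h₁add h₁smul h₁symm q p x y,
      inn_expand inn₂ h₂add h₂smul h₂symm q p x y, ← hpsq, ← hqsq, ← hp2sq,
      ← hq2sq] at hComp
  have amgm : 2 * (q * p) * (p2 * q2) ≤ q * q * p2 ^ 2 + p * p * q2 ^ 2 := by
    nlinarith [sq_nonneg (q * p2 - p * q2)]
  have ineqA : p2 * q2 - inn₂ x y ≤ C * (p * q - inn₁ x y) := by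
    nlinarith [hComp, amgm, mul_pos hp0 hq0]
  have h1 : Real.sqrt c * p ≤ p2 := by
    rw [hpdef, hp2def, ← Real.sqrt_mul hc.le]
    exact Real.sqrt_le_sqrt (hlow x)
  have h2 : Real.sqrt c * q ≤ q2 := by
    rw [hqdef, hq2def, ← Real.sqrt_mul hc.le]
    exact Real.sqrt_le_sqrt (hlow y)
  have ineqB : c * (p * q) ≤ p2 * q2 := by
    have hmul := mul_le_mul h1 h2 (by positivity) hp20.le
    nlinarith [hmul, Real.sq_sqrt hc.le]
  rw [hcos1, hcos2]
  have key : 1 - inn₂ x y / (p2 * q2) ≤ (C / c) * (1 - inn₁ x y / (p * q)) := by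
    have e1 : 1 - inn₂ x y / (p2 * q2) = (p2 * q2 - inn₂ x y) / (p2 * q2) := by
      field_simp
    have e2 : (C / c) * (1 - inn₁ x y / (p * q))
        = C * (p * q - inn₁ x y) / (c * (p * q)) := by
      field_simp
    rw [e1, e2, div_le_div_iff₀ hD2 (by positivity)]
    have hCnum : 0 ≤ C * (p * q - inn₁ x y) := by nlinarith
    nlinarith [mul_le_mul_of_nonneg_right ineqA (mul_pos hc hD1).le,
      mul_le_mul_of_nonneg_left ineqB hCnum]
  linarith
end

section
/- Let (V, ω) be a finite-dimensional real symplectic vector space, J a compatible complex structure, and ⟨x,y⟩ = ω(x, Jy) the induced inner product. Let X ⊂ V be a real linear subspace and define the angle ∠(X) = sup over nonzero y ∈ JX of inf over nonzero x ∈ X of ∠(x,y). Then for all x ∈ X and y in the symplectic orthogonal complement X^ω, one has |⟨x,y⟩| ≤ |x|·|y|·√(2 − 2 cos ∠(X)). -/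
/-- The angle between two vectors with respect to the inner product `inn`,
`∠(x,y) = arccos (⟨x,y⟩ / (|x|·|y|))`. -/
noncomputable def vAngle {V : Type*} [AddCommGroup V] [Module ℝ V]
    (inn : V → V → ℝ) (x y : V) : ℝ :=
  Real.arccos (inn x y / (Real.sqrt (inn x x) * Real.sqrt (inn y y)))

/-- The angle of a subspace `X`: `∠(X) = sup_{0 ≠ y ∈ JX} inf_{0 ≠ x ∈ X} ∠(x, y)`. -/
noncomputable def subspaceAngle {V : Type*} [AddCommGroup V] [Module ℝ V]
    (inn : V → V → ℝ) (J : V →ₗ[ℝ] V) (X : Submodule ℝ V) : ℝ :=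
  sSup {θ : ℝ | ∃ y ∈ X.map J, y ≠ 0 ∧
    θ = sInf {φ : ℝ | ∃ x ∈ X, x ≠ 0 ∧ φ = vAngle inn x y}}

/-!
For nonzero `x' ∈ X` the vector `y ∈ X^ω` satisfies `⟨x', J y⟩ = 0`, so
`⟨x, y⟩ = ⟨J x, J y⟩ = ⟨J x - t • x', J y⟩` for every `t`. With `t = |x| / |x'|` the first factor
is the chord of length `|x| √(2 - 2 cos ∠(x', J x))`, and Cauchy–Schwarz bounds `|⟨x, y⟩|` by
`|x| |y|` times it. This is an upper bound on `cos ∠(x', J x)` uniform in `x'`, hence a lower bound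
on `∠(X, J x)` and on `∠(X) ≥ ∠(X, J x)`; as `∠(X) ≤ π`, it turns back into the claimed bound.
-/

open Real

section Angles

variable {V : Type*} [AddCommGroup V] [Module ℝ V] (inn : V → V → ℝ) (J : V →ₗ[ℝ] V)
  (X : Submodule ℝ V)

lemma vAngle_nonneg (x y : V) : 0 ≤ vAngle inn x y := arccos_nonneg _

lemma vAngle_le_pi (x y : V) : vAngle inn x y ≤ π := arccos_le_pi _

lemma cos_vAngle {x y : V} (h : |inn x y| ≤ √(inn x x) * √(inn y y)) :
    cos (vAngle inn x y) = inn x y / (√(inn x x) * √(inn y y)) := by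
  have hle : |inn x y / (√(inn x x) * √(inn y y))| ≤ 1 := by
    rw [abs_div, abs_of_nonneg (by positivity : (0 : ℝ) ≤ √(inn x x) * √(inn y y))]
    exact div_le_one_of_le₀ h (by positivity)
  exact cos_arccos (abs_le.mp hle).1 (abs_le.mp hle).2

lemma sInf_vAngle_le_pi (y : V) :
    sInf {φ : ℝ | ∃ x ∈ X, x ≠ 0 ∧ φ = vAngle inn x y} ≤ π := by
  obtain hempty | ⟨φ, hφ⟩ := Set.eq_empty_or_nonempty {φ : ℝ | ∃ x ∈ X, x ≠ 0 ∧ φ = vAngle inn x y}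
  · rw [hempty, Real.sInf_empty]
    exact pi_pos.le
  · refine (csInf_le ⟨0, ?_⟩ hφ).trans ?_
    · rintro _ ⟨x, -, -, rfl⟩
      exact vAngle_nonneg inn x y
    · obtain ⟨x, -, -, rfl⟩ := hφ
      exact vAngle_le_pi inn x y

lemma subspaceAngle_le_pi : subspaceAngle inn J X ≤ π :=
  Real.sSup_le (by rintro _ ⟨y, -, -, rfl⟩; exact sInf_vAngle_le_pi inn X y) pi_pos.le

lemma le_subspaceAngle {t : ℝ} {y : V} (hy : y ∈ X.map J) (hy0 : y ≠ 0)
    (ht : ∀ x ∈ X, x ≠ 0 → t ≤ vAngle inn x y) : t ≤ subspaceAngle inn J X := by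
  obtain ⟨x, hx, rfl⟩ := hy
  have hx0 : x ≠ 0 := by rintro rfl; exact hy0 (map_zero J)
  calc t ≤ sInf {φ : ℝ | ∃ x' ∈ X, x' ≠ 0 ∧ φ = vAngle inn x' (J x)} :=
        le_csInf ⟨_, x, hx, hx0, rfl⟩ fun _ ⟨x', hx', hx'0, hφ⟩ => hφ ▸ ht x' hx' hx'0
    _ ≤ subspaceAngle inn J X :=
        le_csSup ⟨π, fun _ ⟨y', _, _, hθ⟩ => hθ ▸ sInf_vAngle_le_pi inn X y'⟩
          ⟨J x, X.mem_map_of_mem hx, hy0, rfl⟩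

lemma cos_subspaceAngle_le {c : ℝ} {y : V} (hy : y ∈ X.map J) (hy0 : y ≠ 0)
    (hc : ∀ x ∈ X, x ≠ 0 → cos (vAngle inn x y) ≤ c) : cos (subspaceAngle inn J X) ≤ c := by
  rcases le_or_gt 1 c with hc1 | hc1
  · exact (cos_le_one _).trans hc1
  have hc_neg : -1 ≤ c := by
    obtain ⟨x, hx, rfl⟩ := hy
    exact (neg_one_le_cos _).trans (hc x hx (by rintro rfl; exact hy0 (map_zero J)))
  have hangle : arccos c ≤ subspaceAngle inn J X := by
    refine le_subspaceAngle inn J X hy hy0 fun x hx hx0 => ?_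
    rw [← arccos_cos (vAngle_nonneg inn x y) (vAngle_le_pi inn x y)]
    exact arccos_le_arccos (hc x hx hx0)
  calc cos (subspaceAngle inn J X)
      ≤ cos (arccos c) := cos_le_cos_of_nonneg_of_le_pi (arccos_nonneg c)
        (subspaceAngle_le_pi inn J X) hangle
    _ = c := cos_arccos hc_neg hc1.le

end Angles

section PosSemidef

variable {V : Type*} [AddCommGroup V] [Module ℝ V] {B : LinearMap.BilinForm ℝ V}

lemma LinearMap.BilinForm.IsPosSemidef.sq_apply_le (hB : B.IsPosSemidef) (x y : V) :
    B x y ^ 2 ≤ B x x * B y y := by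
  have hdiscr := discrim_le_zero (a := B y y) (b := 2 * B x y) (c := B x x) fun t => by
    have := hB.isNonneg.nonneg (x + t • y)
    simp only [map_add, map_smul, LinearMap.add_apply, LinearMap.smul_apply, smul_eq_mul,
      hB.isSymm.eq y x] at this
    linarith
  rw [discrim] at hdiscr
  linarith

lemma LinearMap.BilinForm.IsPosSemidef.abs_apply_le (hB : B.IsPosSemidef) (x y : V) :
    |B x y| ≤ √(B x x) * √(B y y) := by
  rw [← sqrt_mul (hB.isNonneg.nonneg x)]
  exact abs_le_sqrt (hB.sq_apply_le x y)

lemma LinearMap.BilinForm.IsPosSemidef.sq_apply_le_of_apply_eq_zero (hB : B.IsPosSemidef)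
    {a u w : V} (ha : 0 < B a a) (haw : B a w = 0) :
    B u w ^ 2 ≤ B u u * B w w * (2 - 2 * cos (vAngle (fun a b => B a b) a u)) := by
  rcases (hB.isNonneg.nonneg u).eq_or_lt with hu | hu
  · have := hB.sq_apply_le u w
    rw [← hu, zero_mul] at this ⊢
    simpa using this
  rw [cos_vAngle _ (hB.abs_apply_le a u)]
  set r := √(B a a)
  set s := √(B u u)
  have hr : 0 < r := sqrt_pos.mpr ha
  have hs : 0 < s := sqrt_pos.mpr hu
  have hrr : r ^ 2 = B a a := sq_sqrt ha.le
  have hss : s ^ 2 = B u u := sq_sqrt hu.le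
  set v := u - (s / r) • a
  have hvw : B v w = B u w := by simp [v, haw]
  have hvv : B v v = B u u * (2 - 2 * (B a u / (r * s))) := by
    simp only [v, map_sub, map_smul, LinearMap.sub_apply, LinearMap.smul_apply, smul_eq_mul,
      hB.isSymm.eq u a, ← hrr, ← hss]
    field_simp
    ring
  rw [← hvw, mul_right_comm, ← hvv]
  exact hB.sq_apply_le v w

end PosSemidef

section Compatible

variable {V : Type*} [AddCommGroup V] [Module ℝ V] {ω : V →ₗ[ℝ] V →ₗ[ℝ] ℝ} {J : V →ₗ[ℝ] V}

lemma compl₂_apply_comm_of_compatible (hanti : ∀ x y : V, ω x y = - ω y x)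
    (hJ : ∀ x : V, J (J x) = -x) (hcompat : ∀ x y : V, ω (J x) (J y) = ω x y) (a b : V) :
    ω a (J b) = ω b (J a) := by
  rw [← hcompat b (J a), hJ a, map_neg, hanti (J b) a, neg_neg]

lemma isPosSemidef_compl₂_of_compatible (hanti : ∀ x y : V, ω x y = - ω y x)
    (hJ : ∀ x : V, J (J x) = -x) (hcompat : ∀ x y : V, ω (J x) (J y) = ω x y)
    (hpos : ∀ x : V, x ≠ 0 → 0 < ω x (J x)) :
    LinearMap.BilinForm.IsPosSemidef (ω.compl₂ J) where
  eq := compl₂_apply_comm_of_compatible hanti hJ hcompat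
  nonneg x := by
    rcases eq_or_ne x 0 with rfl | hx
    · simp
    · exact (hpos x hx).le

end Compatible

theorem stmt_1_general {V : Type*} [AddCommGroup V] [Module ℝ V]
    (ω : V →ₗ[ℝ] V →ₗ[ℝ] ℝ)
    (hanti : ∀ x y : V, ω x y = - ω y x)
    (J : V →ₗ[ℝ] V) (hJ : ∀ x : V, J (J x) = -x)
    (hcompat : ∀ x y : V, ω (J x) (J y) = ω x y)
    (hpos : ∀ x : V, x ≠ 0 → 0 < ω x (J x))
    (X : Submodule ℝ V) (x : V) (hx : x ∈ X)
    (y : V) (hy : ∀ x' ∈ X, ω x' y = 0) :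
    |ω x (J y)| ≤ Real.sqrt (ω x (J x)) * Real.sqrt (ω y (J y)) *
      Real.sqrt (2 - 2 * Real.cos (subspaceAngle (fun a b => ω a (J b)) J X)) := by
  rcases eq_or_ne x 0 with rfl | hx0
  · simp only [map_zero, LinearMap.zero_apply, abs_zero]
    positivity
  rcases eq_or_ne y 0 with rfl | hy0
  · simp only [map_zero, abs_zero]
    positivity
  have hg := isPosSemidef_compl₂_of_compatible hanti hJ hcompat hpos
  have hK : 0 < ω x (J x) * ω y (J y) := mul_pos (hpos x hx0) (hpos y hy0)
  have hcos_iff : ∀ s : ℝ, s ≤ 1 - ω x (J y) ^ 2 / (2 * (ω x (J x) * ω y (J y))) ↔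
      ω x (J y) ^ 2 ≤ ω x (J x) * ω y (J y) * (2 - 2 * s) := fun s => by
    rw [le_sub_comm, div_le_iff₀ (by positivity)]
    constructor <;> intro <;> linarith
  have hcos := cos_subspaceAngle_le (fun a b => ω a (J b)) J X (y := J x) ⟨x, hx, rfl⟩
    (by intro h; apply hx0; simpa [h] using (hJ x).symm) fun x' hx' hx'0 => by
      rw [hcos_iff, ← hcompat x (J y), ← hcompat x (J x), ← hcompat y (J y)]
      exact hg.sq_apply_le_of_apply_eq_zero (a := x') (u := J x) (w := J y) (hpos x' hx'0)
        (by simp [hJ, hy x' hx'])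
  rw [← sqrt_mul (hpos x hx0).le, ← sqrt_mul hK.le]
  exact abs_le_sqrt ((hcos_iff _).mp hcos)

/-- For a compatible complex structure `J` on a symplectic vector space `(V, ω)`, with
induced inner product `⟨x,y⟩ = ω(x, Jy)`, any `x ∈ X` and `y ∈ X^ω` satisfy
`|⟨x,y⟩| ≤ |x|·|y|·√(2 − 2 cos ∠(X))`. -/
theorem stmt_1 {V : Type*} [AddCommGroup V] [Module ℝ V] [FiniteDimensional ℝ V]
    (ω : V →ₗ[ℝ] V →ₗ[ℝ] ℝ)
    (hanti : ∀ x y : V, ω x y = - ω y x)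
    (hnondeg : ∀ x : V, (∀ y : V, ω x y = 0) → x = 0)
    (J : V →ₗ[ℝ] V) (hJ : ∀ x : V, J (J x) = -x)
    (hcompat : ∀ x y : V, ω (J x) (J y) = ω x y)
    (hpos : ∀ x : V, x ≠ 0 → 0 < ω x (J x))
    (X : Submodule ℝ V) (x : V) (hx : x ∈ X)
    (y : V) (hy : ∀ x' ∈ X, ω x' y = 0) :
    |ω x (J y)| ≤ Real.sqrt (ω x (J x)) * Real.sqrt (ω y (J y)) *
      Real.sqrt (2 - 2 * Real.cos (subspaceAngle (fun a b => ω a (J b)) J X)) :=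
  stmt_1_general ω hanti J hJ hcompat hpos X x hx y hy
end

section
/- Let (V, ω, J) be a finite-dimensional real symplectic vector space with compatible J and induced inner product, and X ⊂ V a symplectic subspace with ∠(X) < π/6. Let π^ω : V → X denote the projection along the symplectic orthogonal complement X^ω. Then for all v ∈ V, |π^ω(v)| ≤ |v| / √(2 cos ∠(X) − 1). -/
set_option maxHeartbeats 1000000


/-- If `X` is a symplectic subspace with `∠(X) < π/6` and `π^ω : V → X` denotes the
projection along the symplectic orthogonal complement `X^ω` (so `v = x + y` with
`x = π^ω(v) ∈ X` and `y ∈ X^ω`), then `|π^ω(v)| ≤ |v| / √(2 cos ∠(X) − 1)` for all `v`. -/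
theorem stmt_3 {V : Type*} [AddCommGroup V] [Module ℝ V] [FiniteDimensional ℝ V]
    (ω : V →ₗ[ℝ] V →ₗ[ℝ] ℝ)
    (hanti : ∀ x y : V, ω x y = - ω y x)
    (hnondeg : ∀ x : V, (∀ y : V, ω x y = 0) → x = 0)
    (J : V →ₗ[ℝ] V) (hJ : ∀ x : V, J (J x) = -x)
    (hcompat : ∀ x y : V, ω (J x) (J y) = ω x y)
    (hpos : ∀ x : V, x ≠ 0 → 0 < ω x (J x))
    (X : Submodule ℝ V)
    -- `X` is a symplectic subspace
    (hXsymp : ∀ x ∈ X, (∀ y ∈ X, ω x y = 0) → x = 0)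
    (hangle : subspaceAngle (fun a b => ω a (J b)) J X < Real.pi / 6)
    -- `v = x + y` with `x = π^ω(v) ∈ X` and `y ∈ X^ω`
    (v x y : V) (hx : x ∈ X) (hy : ∀ x' ∈ X, ω x' y = 0) (hv : v = x + y) :
    Real.sqrt (ω x (J x)) ≤
      Real.sqrt (ω v (J v)) /
        Real.sqrt (2 * Real.cos (subspaceAngle (fun a b => ω a (J b)) J X) - 1) := by
  set inn : V → V → ℝ := fun a b => ω a (J b) with hinn
  set θ := subspaceAngle inn J X with hθdef
  -- basic facts about inn
  have hsymm : ∀ a b : V, inn a b = inn b a := by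
    intro a b
    have h1 := hcompat b (J a)
    rw [hJ a] at h1
    have h2 : ω (J b) (-a) = - ω (J b) a := by simp
    have h3 := hanti a (J b)
    simp only [hinn]
    linarith [h1, h2, h3]
  have hnn : ∀ a : V, 0 ≤ inn a a := by
    intro a
    rcases eq_or_ne a 0 with rfl | ha
    · simp [hinn]
    · exact le_of_lt (hpos a ha)
  have hposd : ∀ a : V, a ≠ 0 → 0 < inn a a := fun a ha => hpos a ha
  have hJinn : ∀ a b : V, inn (J a) (J b) = inn a b := by
    intro a b
    have h1 := hcompat (J a) b
    rw [hJ a] at h1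
    have h2 : ω (-a) (J b) = - ω a (J b) := by simp
    simp only [hinn]
    rw [hJ b]
    have h3 : ω (J a) (-b) = - ω (J a) b := by simp
    linarith [h1, h2, h3]
  -- Cauchy-Schwarz
  have hCS : ∀ a b : V, (inn a b)^2 ≤ inn a a * inn b b := by
    intro a b
    have key : ∀ t : ℝ, 0 ≤ inn b b * (t * t) + (2 * inn a b) * t + inn a a := by
      intro t
      have h0 := hnn (a + t • b)
      have hexp : inn (a + t • b) (a + t • b)
          = inn b b * (t * t) + (2 * inn a b) * t + inn a a := by
        have hs := hsymm a b
        simp only [hinn] at hs ⊢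
        simp only [map_add, map_smul, LinearMap.add_apply, LinearMap.smul_apply,
          smul_eq_mul]
        linear_combination (-t) * hs
      linarith [hexp ▸ h0]
    have hd := discrim_le_zero key
    rw [discrim] at hd
    nlinarith [hd]
  have hCSn : ∀ a b : V, |inn a b| ≤ Real.sqrt (inn a a) * Real.sqrt (inn b b) := by
    intro a b
    rw [← Real.sqrt_sq_eq_abs, ← Real.sqrt_mul (hnn a)]
    exact Real.sqrt_le_sqrt (hCS a b)
  have hpi := Real.pi_pos
  -- basic facts about θ
  have hS : ∀ s ∈ {θ : ℝ | ∃ y ∈ X.map J, y ≠ 0 ∧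
      θ = sInf {φ : ℝ | ∃ x ∈ X, x ≠ 0 ∧ φ = vAngle inn x y}}, s ≤ Real.pi := by
    rintro s ⟨y₀, hy₀J, hy₀0, rfl⟩
    obtain ⟨x₀, hx₀, hx₀y⟩ := Submodule.mem_map.mp hy₀J
    have hx₀0 : x₀ ≠ 0 := by rintro rfl; simp at hx₀y; exact hy₀0 hx₀y.symm
    have hmem : vAngle inn x₀ y₀ ∈ {φ : ℝ | ∃ x ∈ X, x ≠ 0 ∧ φ = vAngle inn x y₀} :=
      ⟨x₀, hx₀, hx₀0, rfl⟩
    have hbdd : BddBelow {φ : ℝ | ∃ x ∈ X, x ≠ 0 ∧ φ = vAngle inn x y₀} := by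
      refine ⟨0, ?_⟩
      rintro φ ⟨x', _, _, rfl⟩
      exact Real.arccos_nonneg _
    calc sInf {φ : ℝ | ∃ x ∈ X, x ≠ 0 ∧ φ = vAngle inn x y₀}
        ≤ vAngle inn x₀ y₀ := csInf_le hbdd hmem
      _ ≤ Real.pi := Real.arccos_le_pi _
  have hSbdd : BddAbove {θ : ℝ | ∃ y ∈ X.map J, y ≠ 0 ∧
      θ = sInf {φ : ℝ | ∃ x ∈ X, x ≠ 0 ∧ φ = vAngle inn x y}} := ⟨Real.pi, hS⟩
  clear_value inn θ
  -- main case split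
  rcases eq_or_ne x 0 with rfl | hx0
  · simp only [hinn, map_zero, LinearMap.zero_apply, Real.sqrt_zero]
    exact div_nonneg (Real.sqrt_nonneg _) (Real.sqrt_nonneg _)
  -- x ≠ 0
  have hw : J (-x) ≠ 0 := by
    intro h
    have : J (J (-x)) = J 0 := by rw [h]
    rw [hJ, map_zero, neg_neg] at this
    exact hx0 this
  have hwJ : J (-x) ∈ X.map J := Submodule.mem_map.mpr ⟨-x, X.neg_mem hx, rfl⟩
  set w : V := J (-x) with hwdef
  have hJw : J w = x := by rw [hwdef, hJ, neg_neg]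
  set T := {φ : ℝ | ∃ x' ∈ X, x' ≠ 0 ∧ φ = vAngle inn x' w} with hTdef
  have hTne : T.Nonempty := ⟨vAngle inn x w, x, hx, hx0, rfl⟩
  have hTbdd : BddBelow T := by
    refine ⟨0, ?_⟩
    rintro φ ⟨x', _, _, rfl⟩
    exact Real.arccos_nonneg _
  have htmem : sInf T ∈ {θ : ℝ | ∃ y ∈ X.map J, y ≠ 0 ∧
      θ = sInf {φ : ℝ | ∃ x ∈ X, x ≠ 0 ∧ φ = vAngle inn x y}} := ⟨w, hwJ, hw, rfl⟩
  have htθ : sInf T ≤ θ := by rw [hθdef]; exact le_csSup hSbdd htmem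
  have ht0 : 0 ≤ sInf T := le_csInf hTne (by rintro φ ⟨x', _, _, rfl⟩; exact Real.arccos_nonneg _)
  have hθ0 : 0 ≤ θ := le_trans ht0 htθ
  have hθpi6 : θ < Real.pi / 6 := hangle
  have hcosθ : Real.sqrt 3 / 2 ≤ Real.cos θ := by
    have := Real.cos_le_cos_of_nonneg_of_le_pi hθ0 (by linarith) (le_of_lt hθpi6)
    rwa [Real.cos_pi_div_six] at this
  have hsqrt3 : (1:ℝ) < Real.sqrt 3 := by
    have h3 : Real.sqrt 3 ^ 2 = 3 := Real.sq_sqrt (by norm_num)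
    nlinarith [Real.sqrt_nonneg 3]
  have hcpos : 0 < 2 * Real.cos θ - 1 := by linarith
  have hcos1 : Real.cos θ ≤ 1 := Real.cos_le_one θ
  -- the ε-estimate
  have hkey : ∀ ε ∈ Set.Ioo (0:ℝ) (Real.pi/2),
      (inn x y)^2 ≤ (2 - 2 * Real.cos (θ + ε)) * (inn x x * inn y y) := by
    rintro ε ⟨hε0, hεpi⟩
    have hlt : sInf T < θ + ε := by linarith
    obtain ⟨φ, ⟨x', hx', hx'0, rfl⟩, hφlt⟩ := (csInf_lt_iff hTbdd hTne).mp hlt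
    set u : V := J x' with hudef
    have hu0 : u ≠ 0 := by
      intro h
      have : J (J x') = J 0 := by rw [← hudef, h]
      rw [hJ, map_zero] at this
      exact hx'0 (by simpa using this.symm)
    have huy : inn u y = 0 := by
      simp only [hinn, hudef]
      rw [hcompat]
      exact hy x' hx'
    -- vAngle x u = vAngle x' w
    have e1 : inn x u = inn x' w := by
      rw [← hJw, hudef, hJinn, hsymm]
    have e2 : inn x x = inn w w := by rw [← hJw, hJinn]
    have e3 : inn u u = inn x' x' := by rw [hudef, hJinn]
    have hαeq : vAngle inn x u = vAngle inn x' w := by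
      unfold vAngle
      rw [e1, e2, e3, mul_comm (Real.sqrt (inn w w))]
    have hα0 : 0 ≤ vAngle inn x u := Real.arccos_nonneg _
    have hαpi : vAngle inn x u ≤ Real.pi := Real.arccos_le_pi _
    set α := vAngle inn x u with hαdef
    have hαlt : α < θ + ε := by rw [hαeq]; exact hφlt
    have hθεpi : θ + ε ≤ Real.pi := by linarith
    have hcosle : Real.cos (θ + ε) ≤ Real.cos α :=
      Real.cos_le_cos_of_nonneg_of_le_pi hα0 hθεpi (le_of_lt hαlt)
    -- cos α = inn x u / (nx * nu)
    have hnx : 0 < Real.sqrt (inn x x) := Real.sqrt_pos.mpr (hposd x hx0)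
    have hnu : 0 < Real.sqrt (inn u u) := Real.sqrt_pos.mpr (hposd u hu0)
    have hq : |inn x u / (Real.sqrt (inn x x) * Real.sqrt (inn u u))| ≤ 1 := by
      rw [abs_div, abs_of_pos (mul_pos hnx hnu)]
      exact div_le_one_of_le₀ (hCSn x u) (le_of_lt (mul_pos hnx hnu))
    have hcosα : Real.cos α = inn x u / (Real.sqrt (inn x x) * Real.sqrt (inn u u)) := by
      have h1 := abs_le.mp hq
      rw [hαdef]
      show Real.cos (vAngle inn x u) = _
      unfold vAngle
      exact Real.cos_arccos h1.1 h1.2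
    have hxu : inn x u = Real.sqrt (inn x x) * Real.sqrt (inn u u) * Real.cos α := by
      rw [hcosα]; field_simp
    -- projection estimate with z = nu • x - nx • u
    set nx : ℝ := Real.sqrt (inn x x) with hnxdef
    set nu : ℝ := Real.sqrt (inn u u) with hnudef
    set z : V := nu • x - nx • u with hzdef
    have hzz : inn z z = nu^2 * inn x x - 2*(nu*nx)* inn x u + nx^2 * inn u u := by
      have hs := hsymm x u
      simp only [hinn] at hs ⊢
      simp only [hzdef, map_sub, map_smul, LinearMap.sub_apply, LinearMap.smul_apply,
        smul_eq_mul]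
      linear_combination (nu*nx) * hs
    have hzy : inn z y = nu * inn x y := by
      simp only [hinn] at huy ⊢
      simp only [hzdef, map_sub, map_smul, LinearMap.sub_apply, LinearMap.smul_apply,
        smul_eq_mul]
      rw [huy]
      ring
    have hsqx : nx ^ 2 = inn x x := Real.sq_sqrt (hnn x)
    have hsqu : nu ^ 2 = inn u u := Real.sq_sqrt (hnn u)
    have hCS2 := hCS z y
    clear_value nx nu z
    rw [hzz, hzy, hxu] at hCS2
    have e : ((2 - 2*Real.cos α) * (inn x x * inn y y)) * nu^2
        = (nu^2*inn x x - 2*(nu*nx)*(nx*nu*Real.cos α) + nx^2*inn u u) * inn y y := by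
      linear_combination (inn x x * inn y y) * hsqu
        + (2*Real.cos α*inn y y*nu^2 - inn u u * inn y y) * hsqx
    have h5 : (inn x y)^2 * nu^2 ≤ ((2 - 2*Real.cos α) * (inn x x * inn y y)) * nu^2 := by
      calc (inn x y)^2 * nu^2 = (nu * inn x y)^2 := by ring
        _ ≤ _ := hCS2
        _ = _ := e.symm
    have h6 : (inn x y)^2 ≤ (2 - 2*Real.cos α) * (inn x x * inn y y) :=
      (mul_le_mul_iff_of_pos_right (pow_pos hnu 2)).mp h5
    nlinarith [h6, hcosle, mul_nonneg (hnn x) (hnn y)]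
  -- pass to the limit ε → 0⁺
  have hlim : Filter.Tendsto (fun ε : ℝ => (2 - 2 * Real.cos (θ + ε)) * (inn x x * inn y y))
      (nhdsWithin 0 (Set.Ioi 0)) (nhds ((2 - 2 * Real.cos θ) * (inn x x * inn y y))) := by
    have hc : Continuous fun ε : ℝ => (2 - 2 * Real.cos (θ + ε)) * (inn x x * inn y y) :=
      (continuous_const.sub (continuous_const.mul
        (Real.continuous_cos.comp (continuous_const.add continuous_id)))).mul continuous_const
    have := hc.tendsto 0
    simp only [add_zero] at this
    exact this.mono_left nhdsWithin_le_nhds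
  have hev : ∀ᶠ ε in nhdsWithin (0:ℝ) (Set.Ioi 0),
      (inn x y)^2 ≤ (2 - 2 * Real.cos (θ + ε)) * (inn x x * inn y y) := by
    filter_upwards [Ioo_mem_nhdsGT_of_mem (a := Real.pi/2) (b := (0:ℝ)) (c := 0)
      (Set.mem_Ico.mpr ⟨le_refl (0:ℝ), by linarith⟩)] with ε hε
    exact hkey ε hε
  have hineq : (inn x y)^2 ≤ (2 - 2 * Real.cos θ) * (inn x x * inn y y) :=
    ge_of_tendsto hlim hev
  -- final algebra
  have hvv : inn v v = inn x x + 2 * inn x y + inn y y := by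
    have hs := hsymm x y
    rw [hv]
    simp only [hinn] at hs ⊢
    simp only [map_add, LinearMap.add_apply]
    linarith
  have hfin : inn x x * (2 * Real.cos θ - 1) ≤ inn v v := by
    obtain ⟨A, hA⟩ : ∃ A : ℝ, A = (2 - 2*Real.cos θ) * inn x x := ⟨_, rfl⟩
    have hineq2 : (inn x y)^2 ≤ A * inn y y := by rw [hA]; nlinarith [hineq]
    have hA0 : 0 ≤ A := by
      rw [hA]; exact mul_nonneg (by linarith) (hnn x)
    have hAB : 0 ≤ A + inn y y + 2 * inn x y := by
      nlinarith [hineq2, hA0, hnn y, sq_nonneg (A - inn y y)]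
    rw [hA] at hAB
    linarith [hvv, hAB]
  have hgoal : Real.sqrt (inn x x) ≤ Real.sqrt (inn v v) / Real.sqrt (2 * Real.cos θ - 1) := by
    rw [le_div_iff₀ (Real.sqrt_pos.mpr hcpos), ← Real.sqrt_mul (hnn x)]
    exact Real.sqrt_le_sqrt hfin
  simpa only [hinn] using hgoal
end

section
/- Let R = k[[r₁,…,r_m]] be a formal power series ring over a field k with maximal ideal 𝔪 = (r₁,…,r_m). Let Q = R[ξ₁,…,ξ_j, ξ_{j+1}^{±1},…,ξ_n^{±1}] be a Laurent-polynomial ring over R and let W = −ξ₁⋯ξ_j + Σ_α b_α ξ^α, where the sum ranges over a finite set of multi-indices α ∈ (ℤ≥0)^j × ℤ^{n−j} and each b_α ∈ 𝔪. Let S ⊂ (ℤ≥0)^j × ℤ^{n−j} be the set of exponent vectors whose first j entries include at least one zero. Then the natural map from the 𝔪-adic completion of the free R-module ⊕_{α∈S} R·ξ^α to the 𝔪-adic completion of Q/(W) is an isomorphism of R-modules. -/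
/-- The maximal ideal `𝔪 = (r₁, …, r_m)` of the formal power series ring `k[[r₁,…,r_m]]`. -/
noncomputable def psMaxIdeal (k : Type*) [Field k] (m : ℕ) :
    Ideal (MvPowerSeries (Fin m) k) :=
  Ideal.span (Set.range fun i : Fin m => (MvPowerSeries.X i : MvPowerSeries (Fin m) k))

/-- Exponents of Laurent monomials: nonnegative in the first `j` variables, arbitrary
integers in the remaining `d` variables. -/
abbrev LaurentExp (j d : ℕ) : Type := (Fin j → ℕ) × (Fin d → ℤ)

/-- The Laurent polynomial ring `R[ξ₁,…,ξ_j, ξ_{j+1}^{±1},…,ξ_n^{±1}]` over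
`R = k[[r₁,…,r_m]]`. -/
abbrev LaurentRing (k : Type*) [Field k] (m j d : ℕ) :=
  AddMonoidAlgebra (MvPowerSeries (Fin m) k) (LaurentExp j d)

/-- The monomial `ξ^α` with coefficient `r`. -/
noncomputable def lmono {k : Type*} [Field k] {m j d : ℕ} (α : LaurentExp j d)
    (r : MvPowerSeries (Fin m) k) : LaurentRing k m j d :=
  AddMonoidAlgebra.single α r

/-!
Write `Q = R[G]` with `G` a cancellative monoid, `W = -ξ^e + B` with all coefficients of `B`
in `𝔪`, let `𝔞 = 𝔪 Q`, and let `S = G \ (e + G)`.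

By the completed Nakayama lemma, surjectivity on completions follows from surjectivity modulo
`𝔪`, which is division with remainder by `ξ^e`: `F = ξ^e (F / ξ^e) + (F mod ξ^e)`, the
remainder is supported on `S`, and `ξ^e ≡ B ∈ 𝔞` modulo `W`.

Injectivity on completions follows from injectivity modulo every `𝔪^t`: if `F` is supported
on `S` and `F = q + y W` with `q ∈ 𝔞^t`, then `ξ^e y = q + y B - F`, and dividing by `ξ^e`
kills `F`, so `y = (q + y B) / ξ^e`. Hence `y ∈ 𝔞^s` forces `y ∈ 𝔞^(s+1)` for `s < t`, so
`y ∈ 𝔞^t` and `F ∈ 𝔞^t`.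
-/

section IdealCoefficients

variable {R : Type*} [CommRing R] (I : Ideal R)

theorem Finsupp.mem_ideal_smul_top_iff {ι : Type*} (x : ι →₀ R) :
    x ∈ I • (⊤ : Submodule R (ι →₀ R)) ↔ ∀ i, x i ∈ I := by
  rw [← Finsupp.submodule_top, ← Finsupp.submodule_smul, Finsupp.mem_submodule_iff]
  simp

theorem AddMonoidAlgebra.mem_map_algebraMap_iff {G : Type*} [AddCommMonoid G]
    (x : AddMonoidAlgebra R G) :
    x ∈ I.map (algebraMap R (AddMonoidAlgebra R G)) ↔ ∀ g, x.coeff g ∈ I := by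
  rw [← Submodule.restrictScalars_mem R, ← Ideal.smul_top_eq_map, ← Finsupp.mem_ideal_smul_top_iff,
    ← LinearEquiv.range (AddMonoidAlgebra.coeffLinearEquiv R), ← Submodule.map_top,
    ← Submodule.map_smul'', Submodule.mem_map_equiv]
  rfl

theorem AddMonoidAlgebra.divOf_mem_map_algebraMap {G : Type*} [AddCommMonoid G] [IsCancelAdd G]
    {x : AddMonoidAlgebra R G} (hx : x ∈ I.map (algebraMap R (AddMonoidAlgebra R G))) (g : G) :
    x.divOf g ∈ I.map (algebraMap R (AddMonoidAlgebra R G)) := by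
  rw [mem_map_algebraMap_iff] at hx ⊢
  exact fun g' => hx (g + g')

theorem Ideal.Quotient.mk_mem_smul_top_iff {S : Type*} [CommRing S] [Algebra R S] (J : Ideal S)
    (x : S) : Ideal.Quotient.mk J x ∈ I • (⊤ : Submodule R (S ⧸ J)) ↔
      x ∈ I.map (algebraMap R S) ⊔ J := by
  rw [← Submodule.restrictScalars_mem R, Ideal.smul_top_eq_map, IsScalarTower.algebraMap_eq R S,
    ← Ideal.map_map, Ideal.Quotient.algebraMap_eq, Submodule.restrictScalars_mem R]
  exact Ideal.mem_quotient_iff_mem_sup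

theorem AdicCompletion.map_injective_of_comap_pow_smul_top_le {M N : Type*} [AddCommGroup M]
    [Module R M] [AddCommGroup N] [Module R N] (f : M →ₗ[R] N)
    (h : ∀ t : ℕ, (I ^ t • ⊤ : Submodule R N).comap f ≤ I ^ t • ⊤) :
    Function.Injective (AdicCompletion.map I f) := by
  rw [injective_iff_map_eq_zero]
  intro x hx
  ext t
  obtain ⟨m, hm⟩ := Submodule.Quotient.mk_surjective _ (x.val t)
  have hfm := congrArg (fun y => y.val t) hx
  simp only [map_val_apply, ← hm, LinearMap.reduceModIdeal_apply, val_zero, Pi.zero_apply,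
    Submodule.Quotient.mk_eq_zero] at hfm
  rw [← hm, val_zero, Pi.zero_apply, Submodule.Quotient.mk_eq_zero]
  exact h t hfm

end IdealCoefficients

namespace AddMonoidAlgebra

section OfSubtype

variable (R : Type*) [CommRing R] {G : Type*} (P : G → Prop)

noncomputable def ofSubtype : ({c // P c} →₀ R) →ₗ[R] AddMonoidAlgebra R G :=
  (coeffLinearEquiv R).symm.toLinearMap ∘ₗ Finsupp.lmapDomain R R Subtype.val

variable {R P}

theorem coeff_ofSubtype (x : {c // P c} →₀ R) :
    (ofSubtype R P x).coeff = x.mapDomain Subtype.val :=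
  rfl

theorem mem_range_ofSubtype_iff [AddCommMonoid G] [IsCancelAdd G] {e : G}
    (hP : ∀ c, P c ↔ ¬∃ d, c = e + d) (F : AddMonoidAlgebra R G) :
    F ∈ LinearMap.range (ofSubtype R P) ↔ F.divOf e = 0 := by
  have hrange : F ∈ LinearMap.range (ofSubtype R P) ↔
      F.coeff ∈ Set.range (Finsupp.mapDomain Subtype.val) :=
    ⟨fun ⟨x, hx⟩ => ⟨x, hx ▸ rfl⟩, fun ⟨x, hx⟩ => ⟨x, coeff_injective hx⟩⟩
  refine (hrange.trans (Finsupp.mem_range_mapDomain_iff _ Subtype.val_injective _)).trans ?_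
  rw [Subtype.range_coe_subtype]
  simp only [Set.mem_ofPred_eq, hP, not_not, ← coeff_inj, Finsupp.ext_iff, coeff_divOf,
    coeff_zero, Finsupp.coe_zero, Pi.zero_apply]
  exact ⟨fun h d => h _ ⟨d, rfl⟩, fun h _ ⟨d, hd⟩ => hd ▸ h d⟩

theorem mem_smul_top_of_ofSubtype_mem [AddCommMonoid G] (I : Ideal R) {x : {c // P c} →₀ R}
    (hx : ofSubtype R P x ∈ I.map (algebraMap R (AddMonoidAlgebra R G))) :
    x ∈ I • (⊤ : Submodule R ({c // P c} →₀ R)) := by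
  rw [mem_map_algebraMap_iff, coeff_ofSubtype] at hx
  rw [Finsupp.mem_ideal_smul_top_iff]
  intro c
  simpa [Finsupp.mapDomain_apply Subtype.val_injective] using hx c

end OfSubtype

variable {R : Type*} [CommRing R] (I : Ideal R) {G : Type*} [AddCommMonoid G] [IsCancelAdd G]
  {e : G} {B : AddMonoidAlgebra R G} {P : G → Prop}

theorem mem_pow_of_divOf_eq_zero (hB : B ∈ I.map (algebraMap R (AddMonoidAlgebra R G)))
    {F y : AddMonoidAlgebra R G} (hF : F.divOf e = 0) {t : ℕ}
    (h : F - y * (-of' R G e + B) ∈ I.map (algebraMap R (AddMonoidAlgebra R G)) ^ t) :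
    F ∈ I.map (algebraMap R (AddMonoidAlgebra R G)) ^ t := by
  set q := F - y * (-of' R G e + B)
  have hy : y = (q + y * B).divOf e := by
    rw [show q + y * B = of' R G e * y + F by ring, add_divOf, of'_mul_divOf, hF, add_zero]
  have hy_mem : ∀ s ≤ t, y ∈ I.map (algebraMap R (AddMonoidAlgebra R G)) ^ s := by
    intro s
    induction s with
    | zero => simp
    | succ s ih =>
      intro hst
      rw [hy, ← Ideal.map_pow]
      refine divOf_mem_map_algebraMap _ ?_ e
      rw [Ideal.map_pow]
      refine add_mem (Ideal.pow_le_pow_right hst h) ?_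
      rw [pow_succ]
      exact Ideal.mul_mem_mul (ih (by omega)) hB
  rw [show F = q + y * (-of' R G e + B) by ring]
  exact add_mem h (Ideal.mul_mem_right _ _ (hy_mem t le_rfl))

theorem ofSubtype_comap_pow_smul_top_le (hB : B ∈ I.map (algebraMap R (AddMonoidAlgebra R G)))
    (hP : ∀ c, P c ↔ ¬∃ d, c = e + d) (t : ℕ) :
    (I ^ t • ⊤ : Submodule R (AddMonoidAlgebra R G ⧸ Ideal.span {-of' R G e + B})).comap
        ((Ideal.Quotient.mkₐ R _).toLinearMap ∘ₗ ofSubtype R P) ≤ I ^ t • ⊤ := by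
  intro x hx
  simp only [Submodule.mem_comap, LinearMap.comp_apply, AlgHom.toLinearMap_apply,
    Ideal.Quotient.mkₐ_eq_mk, Ideal.Quotient.mk_mem_smul_top_iff, Ideal.map_pow,
    Submodule.mem_sup, Ideal.mem_span_singleton'] at hx
  obtain ⟨q, hq, _, ⟨y, rfl⟩, hqy⟩ := hx
  refine mem_smul_top_of_ofSubtype_mem _ ?_
  rw [Ideal.map_pow]
  refine mem_pow_of_divOf_eq_zero I hB ((mem_range_ofSubtype_iff hP _).mp ⟨x, rfl⟩) (y := y) ?_
  rwa [← hqy, mul_comm, add_sub_cancel_right]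

theorem mkQ_comp_ofSubtype_surjective (hB : B ∈ I.map (algebraMap R (AddMonoidAlgebra R G)))
    (hP : ∀ c, P c ↔ ¬∃ d, c = e + d) :
    Function.Surjective ((I • ⊤ : Submodule R (AddMonoidAlgebra R G ⧸
      Ideal.span {-of' R G e + B})).mkQ ∘ₗ (Ideal.Quotient.mkₐ R _).toLinearMap ∘ₗ
        ofSubtype R P) := by
  intro a
  obtain ⟨z, rfl⟩ := Submodule.mkQ_surjective _ a
  obtain ⟨F, rfl⟩ := Ideal.Quotient.mk_surjective z
  obtain ⟨x, hx⟩ := (mem_range_ofSubtype_iff hP (F.modOf e)).mpr (by ext; simp)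
  refine ⟨x, ?_⟩
  simp only [LinearMap.comp_apply, AlgHom.toLinearMap_apply, Ideal.Quotient.mkₐ_eq_mk, hx,
    Submodule.mkQ_apply, Submodule.Quotient.eq, ← map_sub, Ideal.Quotient.mk_mem_smul_top_iff]
  have hdiff : F.modOf e - F = (-of' R G e + B) * F.divOf e - B * F.divOf e := by
    linear_combination divOf_add_modOf F e
  rw [hdiff]
  exact sub_mem (Ideal.mem_sup_right (Ideal.mul_mem_right _ _ (Ideal.mem_span_singleton_self _)))
    (Ideal.mem_sup_left (Ideal.mul_mem_right _ _ hB))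

theorem adicCompletion_map_ofSubtype_bijective (hB : B ∈ I.map (algebraMap R (AddMonoidAlgebra R G)))
    (hP : ∀ c, P c ↔ ¬∃ d, c = e + d) :
    Function.Bijective (AdicCompletion.map I
      ((Ideal.Quotient.mkₐ R (Ideal.span {-of' R G e + B})).toLinearMap ∘ₗ ofSubtype R P)) :=
  ⟨AdicCompletion.map_injective_of_comap_pow_smul_top_le I _
      (ofSubtype_comap_pow_smul_top_le I hB hP),
    AdicCompletion.map_surjective_of_mkQ_comp_surjective (mkQ_comp_ofSubtype_surjective I hB hP)⟩

end AddMonoidAlgebra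

theorem LaurentExp.exists_eq_zero_iff {j d : ℕ} (c : LaurentExp j d) :
    (∃ i, c.1 i = 0) ↔ ¬∃ c', c = ((fun _ => 1), 0) + c' := by
  constructor
  · rintro ⟨i, hi⟩ ⟨c', rfl⟩
    simp at hi
  · intro h
    by_contra! hc
    refine h ⟨(fun i => c.1 i - 1, c.2), Prod.ext (funext fun i => ?_) (zero_add c.2).symm⟩
    have := hc i
    change c.1 i = 1 + (c.1 i - 1)
    omega

/-- Let `R = k[[r₁,…,r_m]]` with maximal ideal `𝔪`,
`Q = R[ξ₁,…,ξ_j, ξ_{j+1}^{±1},…,ξ_n^{±1}]`, and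
`W = −ξ₁⋯ξ_j + ∑_α b_α ξ^α` with finitely many coefficients `b_α ∈ 𝔪`.  Let `S` be the set
of exponent vectors whose first `j` entries include a zero.  Then the natural map from the
`𝔪`-adic completion of the free module `⊕_{α ∈ S} R·ξ^α` to the `𝔪`-adic completion of
`Q/(W)` is an isomorphism (i.e. bijective). -/
theorem stmt_6 {k : Type*} [Field k] (m n j : ℕ)
    (T : Finset (LaurentExp j (n - j)))
    (b : LaurentExp j (n - j) → MvPowerSeries (Fin m) k)
    (hb : ∀ α ∈ T, b α ∈ psMaxIdeal k m)
    (W : LaurentRing k m j (n - j))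
    (hW : W = - (lmono ((fun _ => 1 : Fin j → ℕ), (0 : Fin (n - j) → ℤ)) 1 : LaurentRing k m j (n - j))
            + ∑ α ∈ T, lmono α (b α)) :
    Function.Bijective
      (AdicCompletion.map (psMaxIdeal k m)
        ((Finsupp.lsum (MvPowerSeries (Fin m) k))
          (fun α : {a : LaurentExp j (n - j) // ∃ i : Fin j, a.1 i = 0} =>
            LinearMap.toSpanSingleton (MvPowerSeries (Fin m) k)
              (LaurentRing k m j (n - j) ⧸ Ideal.span {W})
              (Ideal.Quotient.mk (Ideal.span {W}) (lmono α.1 1))))) := by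
  have hB : ∑ α ∈ T, lmono α (b α) ∈
      (psMaxIdeal k m).map (algebraMap _ (LaurentRing k m j (n - j))) := by
    refine Ideal.sum_mem _ fun α hα => ?_
    rw [lmono, ← mul_one (b α), ← smul_eq_mul, ← AddMonoidAlgebra.smul_single, Algebra.smul_def]
    exact Ideal.mul_mem_right _ _ (Ideal.mem_map_of_mem _ (hb α hα))
  have hmap : (Finsupp.lsum (MvPowerSeries (Fin m) k))
      (fun α : {a : LaurentExp j (n - j) // ∃ i : Fin j, a.1 i = 0} =>
        LinearMap.toSpanSingleton (MvPowerSeries (Fin m) k)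
          (LaurentRing k m j (n - j) ⧸ Ideal.span {W})
          (Ideal.Quotient.mk (Ideal.span {W}) (lmono α.1 1))) =
      (Ideal.Quotient.mkₐ _ (Ideal.span {W})).toLinearMap ∘ₗ AddMonoidAlgebra.ofSubtype _ _ := by
    ext α : 2
    simp [lmono, AddMonoidAlgebra.ofSubtype]
  rw [hmap]
  subst hW
  exact AddMonoidAlgebra.adicCompletion_map_ofSubtype_bijective _ hB LaurentExp.exists_eq_zero_iff
end

section
/- Let μ and μ̃ be two A∞ structures on the same pre-A∞ category C which agree in all operations μ^k = μ̃^k for k < s, where s ≥ 3, and such that both restrict to a common underlying graded category structure (μ¹ = μ̃¹ = 0 and μ² = μ̃² given by composition). Then the difference c := μ̃^s − μ^s, viewed as a Hochschild cochain of length s, is a Hochschild cocycle of cohomological degree 2 − s with respect to the Hochschild differential [μ₂, −] determined by μ² and μ¹ = 0. -/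
/-!
Subtract the A∞ relation of `μ` in length `s + 1` from that of `μ'`. A term `μ^p ∘ μ^q` with
`p + q = s + 2` cancels against its counterpart when `p, q < s`, and vanishes on both sides
when `p ≤ 1` or `q ≤ 1`. Since `s ≥ 3`, what survives is the pair `(p, q) = (2, s), (s, 2)`,
and bilinearity turns it into `μ² ∘ c + c ∘ μ²`.
-/

section

open Finset

variable {W₂ W₃ : Type*} [AddCommGroup W₂] [AddCommGroup W₃]

theorem sum_antidiagonal_sub_eq_of_agree_below (f : ℕ → ℕ → W₂ →+ W₂ →+ W₃)
    (μ μ' : ℕ → W₂) (hμ0 : μ 0 = 0) (hμ1 : μ 1 = 0) (s : ℕ) (hs : 3 ≤ s)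
    (hagree : ∀ m < s, μ' m = μ m) :
    ∑ pq ∈ antidiagonal (s + 2),
        (f pq.1 pq.2 (μ' pq.1) (μ' pq.2) - f pq.1 pq.2 (μ pq.1) (μ pq.2)) =
      f 2 s (μ 2) (μ' s - μ s) + f s 2 (μ' s - μ s) (μ 2) := by
  have hlow : ∀ k < 2, μ' k = 0 ∧ μ k = 0 := fun k hk => by
    interval_cases k
    · exact ⟨(hagree 0 (by omega)).trans hμ0, hμ0⟩
    · exact ⟨(hagree 1 (by omega)).trans hμ1, hμ1⟩
  have hμ'2 : μ' 2 = μ 2 := hagree 2 (by omega)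
  rw [sum_eq_add (2, s) (s, 2) (by simp only [ne_eq, Prod.mk.injEq]; omega)]
  · simp only [hμ'2, map_sub, AddMonoidHom.sub_apply]
  · rintro ⟨p, q⟩ hpq ⟨h2s, hs2⟩
    rw [HasAntidiagonal.mem_antidiagonal] at hpq
    simp only [ne_eq, Prod.mk.injEq] at h2s hs2
    rcases lt_or_ge p 2 with hp | hp
    · simp [(hlow p hp).1, (hlow p hp).2]
    rcases lt_or_ge q 2 with hq | hq
    · simp [(hlow q hq).1, (hlow q hq).2]
    rw [hagree p (by omega), hagree q (by omega), sub_self]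
  · exact fun h => absurd (HasAntidiagonal.mem_antidiagonal.2 (by omega)) h
  · exact fun h => absurd (HasAntidiagonal.mem_antidiagonal.2 (by omega)) h

end

theorem stmt_10_general {W₂ W₃ : Type*} [AddCommGroup W₂] [AddCommGroup W₃]
    (comp : ℕ → ℕ → W₂ → W₂ → W₃)
    (haddl : ∀ p q x x' y, comp p q (x + x') y = comp p q x y + comp p q x' y)
    (haddr : ∀ p q x y y', comp p q x (y + y') = comp p q x y + comp p q x y')
    (μ μ' : ℕ → W₂)
    (hμ0 : μ 0 = 0) (hμ1 : μ 1 = 0)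
    (hμ : ∀ m : ℕ,
      ∑ pq ∈ Finset.HasAntidiagonal.antidiagonal (m + 1), comp pq.1 pq.2 (μ pq.1) (μ pq.2) = 0)
    (hμ' : ∀ m : ℕ,
      ∑ pq ∈ Finset.HasAntidiagonal.antidiagonal (m + 1), comp pq.1 pq.2 (μ' pq.1) (μ' pq.2) = 0)
    (s : ℕ) (hs : 3 ≤ s) (hagree : ∀ m < s, μ' m = μ m) :
    comp 2 s (μ 2) (μ' s - μ s) + comp s 2 (μ' s - μ s) (μ 2) = 0 := by
  let f : ℕ → ℕ → W₂ →+ W₂ →+ W₃ := fun p q =>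
    AddMonoidHom.mk' (fun x => AddMonoidHom.mk' (comp p q x) (haddr p q x))
      (fun x x' => AddMonoidHom.ext (haddl p q x x'))
  have hdiff := sum_antidiagonal_sub_eq_of_agree_below f μ μ' hμ0 hμ1 s hs hagree
  rw [Finset.sum_sub_distrib] at hdiff
  exact hdiff.symm.trans (by simp [f, hμ' (s + 1), hμ (s + 1)])

/-- Let `μ` and `μ'` be two A∞ structures on the same pre-A∞ category, agreeing in all
operations of length `< s` (where `s ≥ 3`), and restricting to a common underlying graded
category structure (`μ¹ = μ'¹ = 0`, and `μ² = μ'²` is the composition).  We record the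
Gerstenhaber product of (degree-2) Hochschild cochains through its bihomogeneous length
components `comp p q : CC²(len p) × CC²(len q) → CC³(len p+q−1)`, which are biadditive; the
A∞ relations `μ ∘ μ = 0` and `μ' ∘ μ' = 0` read, in each length `m`,
`∑_{p+q=m+1} comp p q (μ p) (μ q) = 0`.  Then `c := μ'^s − μ^s` is a Hochschild cocycle
(of cohomological degree `2 − s`) for the Hochschild differential `[μ², −]` determined by
`μ²` (and `μ¹ = 0`): that is, `μ² ∘ c + c ∘ μ² = 0`. -/
theorem stmt_10 {W₂ W₃ : Type*} [AddCommGroup W₂] [AddCommGroup W₃]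
    (comp : ℕ → ℕ → W₂ → W₂ → W₃)
    (haddl : ∀ p q x x' y, comp p q (x + x') y = comp p q x y + comp p q x' y)
    (haddr : ∀ p q x y y', comp p q x (y + y') = comp p q x y + comp p q x y')
    (μ μ' : ℕ → W₂)
    (hμ0 : μ 0 = 0) (hμ1 : μ 1 = 0) (hμ'0 : μ' 0 = 0) (hμ'1 : μ' 1 = 0)
    (hμ : ∀ m : ℕ,
      ∑ pq ∈ Finset.HasAntidiagonal.antidiagonal (m + 1), comp pq.1 pq.2 (μ pq.1) (μ pq.2) = 0)
    (hμ' : ∀ m : ℕ,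
      ∑ pq ∈ Finset.HasAntidiagonal.antidiagonal (m + 1), comp pq.1 pq.2 (μ' pq.1) (μ' pq.2) = 0)
    (s : ℕ) (hs : 3 ≤ s) (hagree : ∀ m < s, μ' m = μ m) :
    comp 2 s (μ 2) (μ' s - μ s) + comp s 2 (μ' s - μ s) (μ 2) = 0 :=
  stmt_10_general comp haddl haddr μ μ' hμ0 hμ1 hμ hμ' s hs hagree
end

section
/- Let Δ* ⊂ M*_ℝ ≅ ℝⁿ be a reflexive polytope (a lattice polytope with 0 in its interior whose polar dual is also a lattice polytope), and let C(Δ*) = ℝ≥0 · ({1} × Δ*) ⊂ ℝ × M*_ℝ be the cone over it. Let p ∈ Δ* be a lattice point on a codimension-2 face, assume the tangent cone of Δ* at a rational interior point q of that face is a smooth 2-dimensional cone (intersection of two half-spaces cut out by part of a dual basis). Then there exist lattice points ñ₁, ñ₂ ∈ ∂C(Δ*) ∩ (ℤ × M*) such that: (i) ñᵢ + (0,p) ∉ C(Δ*) for i = 1,2; (ii) ñ₁ + ñ₂ ∉ ∂C(Δ*); (iii) ñ₁ + ñ₂ + (0,p) ∈ ∂C(Δ*). -/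
/-- A point of `ℝⁿ` with integer coordinates. -/
def IsLatticePoint {n : ℕ} (x : Fin n → ℝ) : Prop := ∀ i, ∃ z : ℤ, x i = (z : ℝ)

/-- The cone `C(Δ) = ℝ≥0·({1} × Δ) ⊂ ℝ × ℝⁿ` over a polytope `Δ`. -/
def coneOver {n : ℕ} (Δ : Set (Fin n → ℝ)) : Set (ℝ × (Fin n → ℝ)) :=
  {z | ∃ t : ℝ, 0 ≤ t ∧ ∃ v ∈ Δ, z = (t, t • v)}

open Filter

/-! The tangent-cone hypothesis makes `u₁ ≥ u₁ ⬝ q` and `u₂ ≥ u₂ ⬝ q` supporting half-spaces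
of `Δ`, and `0 ∈ interior Δ` forces `uᵢ ⬝ q < 0`. Since `u₁, u₂` extend to a basis of the dual
lattice, `-p` splits over the lattice as `v₁ + v₂` with `u₂ ⬝ v₁ = 0 = u₁ ⬝ v₂`. For large `K`
clearing the denominators of `q`, `Nᵢ = (K, Kq + vᵢ)` lies in the cone, on the facet cut out by
`u₂`, resp. `u₁`, and adding `(0, p)` pushes it strictly across that facet because
`uᵢ ⬝ p = uᵢ ⬝ q < 0`. The sum `N₁ + N₂ = (1, 0) + (2K - 1, (2K - 1)q + (q - p))` is an interior
point of the cone plus a point of the cone, while `N₁ + N₂ + (0, p) = (2K, 2Kq)` lies on both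
facets. -/

theorem notMem_interior_of_isMinOn {E : Type*} [NormedAddCommGroup E] [NormedSpace ℝ E]
    [FiniteDimensional ℝ E] {s : Set E} {φ : E →ₗ[ℝ] ℝ} (hφ : φ ≠ 0) {z : E}
    (hz : IsMinOn φ s z) : z ∉ interior s := fun h => by
  have := (hz.isLocalMin (mem_interior_iff_mem_nhds.mp h)).hasFDerivAt_eq_zero
    (LinearMap.toContinuousLinearMap φ).hasFDerivAt
  exact hφ (by simpa using congrArg ContinuousLinearMap.toLinearMap this)

theorem exists_dotProduct_basis_eq_one_eq_zero {ι : Type*} [Fintype ι] [DecidableEq ι]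
    (B : Module.Basis ι ℤ (ι → ℤ)) (i : ι) :
    ∃ e : ι → ℤ, B i ⬝ᵥ e = 1 ∧ ∀ j ≠ i, B j ⬝ᵥ e = 0 := by
  set e := (dotProductEquiv ℤ ι).symm (B.coord i)
  have he : ∀ j, B j ⬝ᵥ e = B.coord i (B j) := fun j => by
    rw [dotProduct_comm]
    exact LinearMap.congr_fun ((dotProductEquiv ℤ ι).apply_symm_apply (B.coord i)) (B j)
  refine ⟨e, by simp [he], fun j hj => by simp [he, hj]⟩

theorem exists_add_eq_with_dotProduct_basis_eq_zero {ι : Type*} [Fintype ι] [DecidableEq ι]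
    (B : Module.Basis ι ℤ (ι → ℤ)) {i j : ι} (hji : j ≠ i) (z : ι → ℤ) :
    ∃ w₁ w₂ : ι → ℤ, w₁ + w₂ = z ∧ B j ⬝ᵥ w₁ = 0 ∧ B i ⬝ᵥ w₂ = 0 := by
  obtain ⟨e, hei, hej⟩ := exists_dotProduct_basis_eq_one_eq_zero B i
  refine ⟨(B i ⬝ᵥ z) • e, z - (B i ⬝ᵥ z) • e, add_sub_cancel _ _, ?_, ?_⟩
  · rw [dotProduct_smul, hej j hji, smul_zero]
  · rw [dotProduct_sub, dotProduct_smul, hei, smul_eq_mul, mul_one, sub_self]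

namespace IsLatticePoint

theorem add {n : ℕ} {x y : Fin n → ℝ} (hx : IsLatticePoint x) (hy : IsLatticePoint y) :
    IsLatticePoint (x + y) := fun i => by
  obtain ⟨a, ha⟩ := hx i
  obtain ⟨b, hb⟩ := hy i
  exact ⟨a + b, by simp [ha, hb]⟩

end IsLatticePoint

theorem exists_nat_ge_isLatticePoint_smul {n : ℕ} {q : Fin n → ℝ}
    (hq : ∀ i, ∃ r : ℚ, q i = r) (T : ℝ) : ∃ K : ℕ, T ≤ K ∧ IsLatticePoint ((K : ℝ) • q) := by
  choose r hr using hq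
  obtain ⟨m, hm⟩ := exists_nat_ge T
  have hd : 0 < ∏ i, (r i).den := Finset.prod_pos fun i _ => (r i).pos
  refine ⟨(∏ i, (r i).den) * m, hm.trans (by exact_mod_cast Nat.le_mul_of_pos_left m hd),
    fun i => ?_⟩
  obtain ⟨c, hc⟩ := Finset.dvd_prod_of_mem (fun i => (r i).den) (Finset.mem_univ i)
  refine ⟨(r i).num * c * m, ?_⟩
  have hnum := congrArg (Rat.cast : ℚ → ℝ) (r i).mul_den_eq_num
  push_cast at hnum
  rw [Pi.smul_apply, smul_eq_mul, hr i, hc]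
  push_cast
  rw [← hnum]
  ring

section coneOver

variable {n : ℕ} {Δ : Set (Fin n → ℝ)}

theorem mk_mem_coneOver {t : ℝ} (ht : 0 ≤ t) {v : Fin n → ℝ} (hv : v ∈ Δ) :
    (t, t • v) ∈ coneOver Δ :=
  ⟨t, ht, v, hv, rfl⟩

theorem mul_le_dotProduct_of_mem_coneOver {u : Fin n → ℝ} {c : ℝ}
    (hΔ : ∀ v ∈ Δ, c ≤ u ⬝ᵥ v) {z : ℝ × (Fin n → ℝ)} (hz : z ∈ coneOver Δ) :
    z.1 * c ≤ u ⬝ᵥ z.2 := by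
  obtain ⟨t, ht, v, hv, rfl⟩ := hz
  rw [dotProduct_smul, smul_eq_mul]
  exact mul_le_mul_of_nonneg_left (hΔ v hv) ht

theorem mem_frontier_coneOver {u : Fin n → ℝ} (hu : u ≠ 0) {c : ℝ}
    (hΔ : ∀ v ∈ Δ, c ≤ u ⬝ᵥ v) {z : ℝ × (Fin n → ℝ)} (hz : z ∈ coneOver Δ)
    (hzc : u ⬝ᵥ z.2 = z.1 * c) : z ∈ frontier (coneOver Δ) := by
  set φ : ℝ × (Fin n → ℝ) →ₗ[ℝ] ℝ :=
    dotProductBilin ℝ ℝ u ∘ₗ LinearMap.snd ℝ ℝ _ - c • LinearMap.fst ℝ ℝ _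
  have hφ : φ ≠ 0 := fun h => by
    have := LinearMap.congr_fun h (0, u)
    simp [φ, dotProduct_self_eq_zero, hu] at this
  refine ⟨subset_closure hz, notMem_interior_of_isMinOn hφ fun w hw =>
    show φ z ≤ φ w from ?_⟩
  have := mul_le_dotProduct_of_mem_coneOver hΔ hw
  simp only [φ, LinearMap.sub_apply, LinearMap.comp_apply, LinearMap.smul_apply,
    LinearMap.snd_apply, LinearMap.fst_apply, dotProductBilin_apply_apply, smul_eq_mul]
  linarith

theorem lt_zero_of_le_dotProduct {u : Fin n → ℝ} (hu : u ≠ 0) {c : ℝ}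
    (hΔ : ∀ v ∈ Δ, c ≤ u ⬝ᵥ v) (h0 : 0 ∈ interior Δ) : c < 0 := by
  by_contra! hc
  refine notMem_interior_of_isMinOn (φ := dotProductBilin ℝ ℝ u) (fun h => hu ?_)
    (fun v hv => ?_) h0
  · simpa [dotProduct_self_eq_zero] using LinearMap.congr_fun h u
  · simpa using hc.trans (hΔ v hv)

theorem mk_mem_interior_coneOver {t : ℝ} (ht : 0 < t) {v : Fin n → ℝ} (hv : v ∈ interior Δ) :
    (t, t • v) ∈ interior (coneOver Δ) := by
  let U : Set (ℝ × (Fin n → ℝ)) := {z | 0 < z.1} ∩ (fun z => z.1⁻¹ • z.2) ⁻¹' interior Δ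
  have hU : IsOpen U :=
    ((continuousOn_fst.inv₀ fun z hz => hz.ne').smul continuousOn_snd).isOpen_inter_preimage
      (isOpen_lt continuous_const continuous_fst) isOpen_interior
  have hUΔ : U ⊆ coneOver Δ := fun z ⟨hz1, hz2⟩ =>
    ⟨z.1, hz1.le, z.1⁻¹ • z.2, interior_subset hz2, by rw [smul_inv_smul₀ hz1.ne']⟩
  exact interior_maximal hUΔ hU ⟨ht, by simpa [inv_smul_smul₀ ht.ne'] using hv⟩

theorem add_mem_coneOver (hΔ : Convex ℝ Δ) {z w : ℝ × (Fin n → ℝ)} (hz : z ∈ coneOver Δ)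
    (hw : w ∈ coneOver Δ) : z + w ∈ coneOver Δ := by
  obtain ⟨s, hs, x, hx, rfl⟩ := hz
  obtain ⟨t, ht, y, hy, rfl⟩ := hw
  obtain ⟨v, hv, hsum⟩ := hΔ.exists_mem_add_smul_eq hx hy hs ht
  exact ⟨s + t, add_nonneg hs ht, v, hv, by rw [hsum, Prod.mk_add_mk]⟩

theorem add_mem_interior_coneOver (hΔ : Convex ℝ Δ) {z w : ℝ × (Fin n → ℝ)}
    (hz : z ∈ interior (coneOver Δ)) (hw : w ∈ coneOver Δ) :
    z + w ∈ interior (coneOver Δ) :=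
  interior_mono (Set.add_subset_iff.mpr fun _ ha _ hb => add_mem_coneOver hΔ ha hb)
    (subset_interior_add_left (Set.add_mem_add hz hw))

theorem mk_add_smul_sub_mem_coneOver (hΔ : Convex ℝ Δ) {q y : Fin n → ℝ} (hq : q ∈ Δ)
    (hy : y ∈ Δ) {t K : ℝ} (ht : 0 ≤ t) (htK : t ≤ K) :
    (K, K • q + t • (y - q)) ∈ coneOver Δ := by
  rcases (ht.trans htK).eq_or_lt with rfl | hK
  · obtain rfl : t = 0 := le_antisymm htK ht
    simpa using mk_mem_coneOver le_rfl hq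
  refine ⟨K, hK.le, q + (t / K) • (y - q),
    hΔ.add_smul_sub_mem hq hy ⟨div_nonneg ht hK.le, div_le_one_of_le₀ htK hK.le⟩, ?_⟩
  rw [smul_add, smul_smul, mul_div_cancel₀ t hK.ne']

theorem eventually_mem_frontier_coneOver_and_add_notMem (hΔ : Convex ℝ Δ)
    (h0 : 0 ∈ interior Δ) {p q u x : Fin n → ℝ} (hq : q ∈ Δ) (hu : u ≠ 0)
    (hface : ∀ v ∈ Δ, u ⬝ᵥ q ≤ u ⬝ᵥ v) (hx : ∃ t : ℝ, 0 ≤ t ∧ ∃ y ∈ Δ, x = t • (y - q))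
    (hux : u ⬝ᵥ x = 0) (hp : u ⬝ᵥ p = u ⬝ᵥ q) :
    ∀ᶠ K in atTop, ((K, K • q + x) : ℝ × (Fin n → ℝ)) ∈ frontier (coneOver Δ) ∧
      (K, K • q + x) + (0, p) ∉ coneOver Δ := by
  obtain ⟨t, ht, y, hy, rfl⟩ := hx
  filter_upwards [eventually_ge_atTop t] with K hK
  refine ⟨mem_frontier_coneOver hu hface (mk_add_smul_sub_mem_coneOver hΔ hq hy ht hK) ?_,
    fun h => ?_⟩
  · simp [dotProduct_add, dotProduct_smul, hux]
  · have hle := mul_le_dotProduct_of_mem_coneOver hface h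
    have hc := lt_zero_of_le_dotProduct hu hface h0
    simp only [Prod.fst_add, Prod.snd_add, dotProduct_add, dotProduct_smul, hux, hp,
      smul_eq_mul, add_zero] at hle
    linarith

theorem eventually_pair_frontier_coneOver (hΔ : Convex ℝ Δ) (h0 : 0 ∈ interior Δ)
    {p q u₁ u₂ v₁ v₂ : Fin n → ℝ} (hq : q ∈ Δ) (hu₁ : u₁ ≠ 0) (hu₂ : u₂ ≠ 0)
    (htc : ∀ x, (∃ t : ℝ, 0 ≤ t ∧ ∃ y ∈ Δ, x = t • (y - q)) ↔ 0 ≤ u₁ ⬝ᵥ x ∧ 0 ≤ u₂ ⬝ᵥ x)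
    (hp₁ : u₁ ⬝ᵥ p = u₁ ⬝ᵥ q) (hp₂ : u₂ ⬝ᵥ p = u₂ ⬝ᵥ q)
    (hv : v₁ + v₂ = -p) (hv₁ : u₂ ⬝ᵥ v₁ = 0) (hv₂ : u₁ ⬝ᵥ v₂ = 0) :
    ∀ᶠ K in atTop,
      ((K, K • q + v₁) : ℝ × (Fin n → ℝ)) ∈ frontier (coneOver Δ) ∧
      ((K, K • q + v₂) : ℝ × (Fin n → ℝ)) ∈ frontier (coneOver Δ) ∧
      (K, K • q + v₁) + (0, p) ∉ coneOver Δ ∧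
      (K, K • q + v₂) + (0, p) ∉ coneOver Δ ∧
      (K, K • q + v₁) + (K, K • q + v₂) ∉ frontier (coneOver Δ) ∧
      (K, K • q + v₁) + (K, K • q + v₂) + (0, p) ∈ frontier (coneOver Δ) := by
  have hface : ∀ v ∈ Δ, u₁ ⬝ᵥ q ≤ u₁ ⬝ᵥ v ∧ u₂ ⬝ᵥ q ≤ u₂ ⬝ᵥ v := fun v hv => by
    simpa [dotProduct_sub] using (htc (v - q)).1 ⟨1, zero_le_one, v, hv, (one_smul ℝ _).symm⟩
  have hface₁ v hv := (hface v hv).1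
  have hface₂ v hv := (hface v hv).2
  have hc₁ := lt_zero_of_le_dotProduct hu₁ hface₁ h0
  have hc₂ := lt_zero_of_le_dotProduct hu₂ hface₂ h0
  have hv₁₁ : u₁ ⬝ᵥ v₁ = -(u₁ ⬝ᵥ q) := by
    rw [eq_sub_of_add_eq hv, dotProduct_sub, dotProduct_neg, hp₁, hv₂, sub_zero]
  have hv₂₂ : u₂ ⬝ᵥ v₂ = -(u₂ ⬝ᵥ q) := by
    rw [eq_sub_of_add_eq' hv, dotProduct_sub, dotProduct_neg, hp₂, hv₁, sub_zero]
  obtain ⟨t, ht, y, hy, hqp⟩ :=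
    (htc (q - p)).2 ⟨by simp [dotProduct_sub, hp₁], by simp [dotProduct_sub, hp₂]⟩
  filter_upwards [eventually_mem_frontier_coneOver_and_add_notMem hΔ h0 hq hu₂ hface₂
      ((htc v₁).2 ⟨by linarith, hv₁.ge⟩) hv₁ hp₂,
    eventually_mem_frontier_coneOver_and_add_notMem hΔ h0 hq hu₁ hface₁
      ((htc v₂).2 ⟨hv₂.ge, by linarith⟩) hv₂ hp₁,
    eventually_ge_atTop (t + 1)] with K ⟨hN₁, hpN₁⟩ ⟨hN₂, hpN₂⟩ hK
  have hsum : ((K, K • q + v₁) + (K, K • q + v₂) : ℝ × (Fin n → ℝ)) =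
      (1, (1 : ℝ) • 0) + (2 * K - 1, (2 * K - 1) • q + t • (y - q)) := by
    rw [← hqp]
    refine Prod.ext (by simp only [Prod.fst_add]; ring) ?_
    simp only [Prod.snd_add]
    linear_combination (norm := module) hv
  have hsum' : ((K, K • q + v₁) + (K, K • q + v₂) + (0, p) : ℝ × (Fin n → ℝ)) =
      (2 * K, (2 * K) • q) := by
    refine Prod.ext (by simp only [Prod.fst_add]; ring) ?_
    simp only [Prod.snd_add]
    linear_combination (norm := module) hv
  refine ⟨hN₁, hN₂, hpN₁, hpN₂, fun h => h.2 ?_, ?_⟩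
  · rw [hsum]
    exact add_mem_interior_coneOver hΔ (mk_mem_interior_coneOver one_pos h0)
      (mk_add_smul_sub_mem_coneOver hΔ hq hy ht (by linarith))
  · rw [hsum']
    exact mem_frontier_coneOver hu₁ hface₁ (mk_mem_coneOver (by linarith) hq)
      (by simp [dotProduct_smul])

end coneOver

/-- Let `Δ ⊂ ℝⁿ` be a reflexive polytope (a lattice polytope with `0` in its interior whose
polar dual is again a lattice polytope), `p` a lattice point on a codimension-2 face whose
tangent cone at a rational relative-interior point `q` is a smooth 2-dimensional cone (cut
out by two members of a basis of the dual lattice).  Then there are lattice points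
`N₁, N₂ ∈ ∂C(Δ) ∩ (ℤ × ℤⁿ)` with `ñᵢ + (0,p) ∉ C(Δ)`, `N₁ + N₂ ∉ ∂C(Δ)`, and
`N₁ + N₂ + (0,p) ∈ ∂C(Δ)`. -/
theorem stmt_12 {n : ℕ} (hn : 2 ≤ n)
    (Δ : Set (Fin n → ℝ))
    -- `Δ` is a lattice polytope …
    (S : Finset (Fin n → ℝ))
    (hΔ : Δ = convexHull ℝ (S : Set (Fin n → ℝ)))
    -- … with `0` in its interior …
    (h0 : (0 : Fin n → ℝ) ∈ interior Δ)
    -- `p` is a lattice point of `Δ` and `q` a rational point of `Δ`: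
    (p q : Fin n → ℝ) (hplat : IsLatticePoint p) (hq : q ∈ Δ)
    (hqrat : ∀ i, ∃ r : ℚ, q i = (r : ℝ))
    -- smoothness: the tangent cone of `Δ` at `q` is cut out by two members `u₁, u₂` of a
    -- basis of the dual lattice:
    (u₁ u₂ : Fin n → ℤ) (B : Module.Basis (Fin n) ℤ (Fin n → ℤ))
    (hu₁ : u₁ = B ⟨0, by omega⟩) (hu₂ : u₂ = B ⟨1, by omega⟩)
    (htc : ∀ x : Fin n → ℝ,
      (∃ t : ℝ, 0 ≤ t ∧ ∃ y ∈ Δ, x = t • (y - q)) ↔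
        (0 ≤ ∑ i, (u₁ i : ℝ) * x i ∧ 0 ≤ ∑ i, (u₂ i : ℝ) * x i))
    -- `p` lies on the codimension-2 face containing `q` in its relative interior
    -- (the locus in `Δ` where both `u₁, u₂` vanish relative to `q`):
    (hpF₁ : ∑ i, (u₁ i : ℝ) * (p i - q i) = 0)
    (hpF₂ : ∑ i, (u₂ i : ℝ) * (p i - q i) = 0) :
    ∃ N₁ N₂ : ℝ × (Fin n → ℝ),
      N₁ ∈ frontier (coneOver Δ) ∧ N₂ ∈ frontier (coneOver Δ) ∧
      (∃ z : ℤ, N₁.1 = (z : ℝ)) ∧ IsLatticePoint N₁.2 ∧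
      (∃ z : ℤ, N₂.1 = (z : ℝ)) ∧ IsLatticePoint N₂.2 ∧
      N₁ + ((0 : ℝ), p) ∉ coneOver Δ ∧
      N₂ + ((0 : ℝ), p) ∉ coneOver Δ ∧
      N₁ + N₂ ∉ frontier (coneOver Δ) ∧
      N₁ + N₂ + ((0 : ℝ), p) ∈ frontier (coneOver Δ) := by
  have hΔc : Convex ℝ Δ := hΔ ▸ convex_convexHull ℝ _
  have hcast : ∀ u : Fin n → ℤ, u ≠ 0 → (Int.cast ∘ u : Fin n → ℝ) ≠ 0 := fun u hu h =>
    hu (funext fun i => by simpa using congrFun h i)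
  have hcast_dot : ∀ u w : Fin n → ℤ, (Int.cast ∘ u : Fin n → ℝ) ⬝ᵥ (Int.cast ∘ w) = u ⬝ᵥ w :=
    fun u w => ((Int.castRingHom ℝ).map_dotProduct u w).symm
  choose z hz using hplat
  obtain ⟨w₁, w₂, hw, hw₁, hw₂⟩ :=
    exists_add_eq_with_dotProduct_basis_eq_zero B (i := ⟨0, by omega⟩) (j := ⟨1, by omega⟩)
      (by simp [Fin.ext_iff]) (-z)
  subst hu₁ hu₂
  have key := eventually_pair_frontier_coneOver hΔc h0 hq (hcast _ (B.ne_zero _))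
    (hcast _ (B.ne_zero _)) htc
    (p := p) (by rw [← sub_eq_zero, ← dotProduct_sub]; exact hpF₁)
    (by rw [← sub_eq_zero, ← dotProduct_sub]; exact hpF₂)
    (v₁ := Int.cast ∘ w₁) (v₂ := Int.cast ∘ w₂)
    (funext fun i => by simpa [hz i] using congrArg (Int.cast : ℤ → ℝ) (congrFun hw i))
    (by rw [hcast_dot, hw₁, Int.cast_zero]) (by rw [hcast_dot, hw₂, Int.cast_zero])
  obtain ⟨T, hT⟩ := key.exists_forall_of_atTop
  obtain ⟨K, hKT, hKq⟩ := exists_nat_ge_isLatticePoint_smul hqrat T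
  obtain ⟨h₁, h₂, h₃, h₄, h₅, h₆⟩ := hT K hKT
  exact ⟨_, _, h₁, h₂, ⟨K, rfl⟩, hKq.add fun i => ⟨w₁ i, rfl⟩, ⟨K, rfl⟩,
    hKq.add fun i => ⟨w₂ i, rfl⟩, h₃, h₄, h₅, h₆⟩
end
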